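/- arXiv:0911.1913 — 2 statements merged into one kernel-verified Lean document; each statement's English description precedes it below -/
import Mathlib

section
/- The complex number (2-i)/(2+i) is not a root of unity; that is, for every positive integer k, ((2-i)/(2+i))^k ≠ 1. -/
/-!
Sending `i ↦ 2` defines a ring homomorphism `ℤ[i] → ZMod 5`, because `2 ^ 2 = -1` in `ZMod 5`.
It kills `2 - i` but sends `2 + i` to `4 ≠ 0`, so no positive power of `2 - i` can equal the
same power of `2 + i`, which is what `((2 - i) / (2 + i)) ^ k = 1` would say.
-/

open GaussianInt

theorem pow_ne_pow_of_map_eq_zero {M₀ N₀ F : Type*} [MonoidWithZero M₀] [MonoidWithZero N₀]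
    [NoZeroDivisors N₀] [FunLike F M₀ N₀] [MonoidWithZeroHomClass F M₀ N₀] (f : F)
    {a b : M₀} (ha : f a = 0) (hb : f b ≠ 0) {k : ℕ} (hk : k ≠ 0) : a ^ k ≠ b ^ k := by
  intro h
  have h_map := congrArg f h
  rw [map_pow, map_pow, ha, zero_pow hk] at h_map
  exact pow_ne_zero k hb h_map.symm

def GaussianInt.toZModFive : GaussianInt →+* ZMod 5 := Zsqrtd.lift ⟨2, by decide⟩

theorem GaussianInt.two_sub_i_pow_ne_two_add_i_pow {k : ℕ} (hk : k ≠ 0) :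
    (⟨2, -1⟩ : GaussianInt) ^ k ≠ ⟨2, 1⟩ ^ k := by
  have h_sub : toZModFive ⟨2, -1⟩ = 0 := by decide
  have h_add : toZModFive ⟨2, 1⟩ ≠ 0 := by decide
  have : Fact (Nat.Prime 5) := ⟨Nat.prime_five⟩
  exact pow_ne_pow_of_map_eq_zero toZModFive h_sub h_add hk

theorem not_root_of_unity_two_sub_i_div_two_add_i :
    ∀ k : ℕ, 0 < k → ((2 - Complex.I) / (2 + Complex.I)) ^ k ≠ 1 := by
  intro k hk
  have h_ne_zero : (2 + Complex.I) ^ k ≠ 0 := pow_ne_zero _ (by simp [Complex.ext_iff])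
  rw [div_pow, Ne, div_eq_one_iff_eq h_ne_zero]
  have h_gauss := GaussianInt.two_sub_i_pow_ne_two_add_i_pow hk.ne'
  rw [Ne, ← toComplex_inj, map_pow, map_pow, toComplex_def', toComplex_def'] at h_gauss
  simpa [sub_eq_add_neg] using h_gauss
end

section
/- Let j be a primitive cube root of unity in ℂ (so j² + j + 1 = 0). Then (2-j)/(2-j²) is not a root of unity: for every positive integer k, ((2-j)/(2-j²))^k ≠ 1. -/
private def pp : ℕ → ℤ × ℤ
  | 0 => (1, 0)
  | n+1 => (3 * (pp n).1 + 5 * (pp n).2, -5 * (pp n).1 + 8 * (pp n).2)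

private lemma pp_pow (j : ℂ) (hj2 : j ^ 2 = -1 - j) :
    ∀ n : ℕ, (3 - 5 * j) ^ n = ((pp n).1 : ℂ) + ((pp n).2 : ℂ) * j := by
  intro n
  induction n with
  | zero => simp [pp]
  | succ n ih =>
    rw [pow_succ, ih, pp]
    push_cast
    linear_combination (-5 * ((pp n).2 : ℂ)) * hj2

private lemma pp_mod (n : ℕ) (hn : 1 ≤ n) :
    (((pp n).1 : ZMod 7), ((pp n).2 : ZMod 7)) = (3, 2) ∨
    (((pp n).1 : ZMod 7), ((pp n).2 : ZMod 7)) = (5, 1) ∨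
    (((pp n).1 : ZMod 7), ((pp n).2 : ZMod 7)) = (6, 4) := by
  induction n with
  | zero => omega
  | succ n ih =>
    rcases Nat.eq_zero_or_pos n with h | h
    · subst h
      left
      decide
    · have ih' := ih h
      rcases ih' with h1 | h1 | h1
      · right; left
        simp only [pp, Prod.mk.injEq] at h1 ⊢
        push_cast
        rw [h1.1, h1.2]
        constructor <;> decide
      · right; right
        simp only [pp, Prod.mk.injEq] at h1 ⊢
        push_cast
        rw [h1.1, h1.2]
        constructor <;> decide
      · left
        simp only [pp, Prod.mk.injEq] at h1 ⊢
        push_cast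
        rw [h1.1, h1.2]
        constructor <;> decide

theorem not_root_of_unity_two_sub_j_div_two_sub_jsq
    (j : ℂ) (hj : j ^ 2 + j + 1 = 0) (hj1 : j ≠ 1) :
    ∀ k : ℕ, 0 < k → ((2 - j) / (2 - j ^ 2)) ^ k ≠ 1 := by
  intro k hk h
  have hj2 : j ^ 2 = -1 - j := by linear_combination hj
  have h7 : (2 - j) * (3 + j) = 7 := by linear_combination -hj
  have h3j : (3 + j) ≠ 0 := by
    intro h0
    rw [h0, mul_zero] at h7
    norm_num at h7
  have hden : (2 : ℂ) - j ^ 2 = 3 + j := by rw [hj2]; ring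
  have hrw : (2 - j) / (2 - j ^ 2) = (3 - 5 * j) / 7 := by
    rw [hden, div_eq_div_iff h3j (by norm_num)]
    linear_combination (5 : ℂ) * hj
  rw [hrw, div_pow] at h
  have h7k : (7 : ℂ) ^ k ≠ 0 := pow_ne_zero k (by norm_num)
  have heq : (3 - 5 * j) ^ k = 7 ^ k := by
    field_simp at h
    exact h
  rw [pp_pow j hj2 k] at heq
  have hb : (pp k).2 = 0 := by
    by_contra hb
    have hbC : ((pp k).2 : ℂ) ≠ 0 := Int.cast_ne_zero.mpr hb
    have hjq : j = ((7 ^ k - (pp k).1 : ℤ) : ℂ) / ((pp k).2 : ℂ) := by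
      field_simp
      push_cast
      linear_combination heq
    set q : ℚ := ((7 ^ k - (pp k).1 : ℤ) : ℚ) / ((pp k).2 : ℚ) with hq
    have hjq' : j = (q : ℂ) := by rw [hjq, hq]; push_cast; ring
    rw [hjq'] at hj
    have hcast : (q : ℂ) ^ 2 + (q : ℂ) + 1 = ((q ^ 2 + q + 1 : ℚ) : ℂ) := by push_cast; ring
    rw [hcast] at hj
    have hq0 : q ^ 2 + q + 1 = 0 := by exact_mod_cast hj
    nlinarith [sq_nonneg (q + 1/2), sq_nonneg q]
  have ha : (pp k).1 = 7 ^ k := by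
    have : ((pp k).1 : ℂ) = ((7 ^ k : ℤ) : ℂ) := by
      rw [hb] at heq; push_cast at heq ⊢; linear_combination heq
    exact_mod_cast this
  have hm := pp_mod k hk
  rw [ha, hb] at hm
  have h70 : ((7 ^ k : ℤ) : ZMod 7) = 0 := by
    push_cast
    rw [show ((7 : ZMod 7)) = 0 from rfl, zero_pow hk.ne']
  simp only [h70, Int.cast_zero, Prod.mk.injEq] at hm
  rcases hm with ⟨h1, _⟩ | ⟨h1, _⟩ | ⟨h1, _⟩ <;> exact absurd h1 (by decide)
end
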